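/- arXiv:1903.04228 — 6 statements merged into one kernel-verified Lean document; each statement's English description precedes it below -/
import Mathlib

section
/- For 0 < α < 1, the inequality 2^{α-1} > 1 - (3/2)^{1-α} + (1/2)^{1-α}, equivalently c_0^{(α)} = 1/2^{1-α} > c_1^{(α)} = (3/2)^{1-α} - (1/2)^{1-α}, holds if and only if α > log_3(3/2). -/
open Real

/-- c₀ = 2^{α-1} > c₁ = (3/2)^{1-α} - (1/2)^{1-α} holds iff α > log₃(3/2). -/
theorem stmt_1 (α : ℝ) (hα0 : 0 < α) (hα1 : α < 1) :
    ((3/2 : ℝ) ^ (1 - α) - (1/2 : ℝ) ^ (1 - α) < (2 : ℝ) ^ (α - 1)) ↔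
      Real.logb 3 (3/2) < α := by
  have hc : (0:ℝ) < (1/2 : ℝ) ^ (1 - α) := Real.rpow_pos_of_pos (by norm_num) _
  have h2 : (2 : ℝ) ^ (α - 1) = (1/2 : ℝ) ^ (1 - α) := by
    rw [one_div, Real.inv_rpow (by norm_num), ← Real.rpow_neg (by norm_num), neg_sub]
  have h32 : (3/2 : ℝ) ^ (1 - α) = (3:ℝ) ^ (1 - α) * (1/2 : ℝ) ^ (1 - α) := by
    rw [← Real.mul_rpow (by norm_num) (by norm_num)]
    norm_num
  rw [h2, h32]
  have key : (3:ℝ) ^ (1 - α) * (1/2 : ℝ) ^ (1 - α) - (1/2 : ℝ) ^ (1 - α) <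
      (1/2 : ℝ) ^ (1 - α) ↔ (3:ℝ) ^ (1 - α) < 2 := by
    constructor
    · intro h; nlinarith
    · intro h; nlinarith
  rw [key]
  have h2eq : (2:ℝ) = (3:ℝ) ^ (Real.logb 3 2) := (Real.rpow_logb (by norm_num) (by norm_num) (by norm_num)).symm
  have hiff : (3:ℝ) ^ (1 - α) < 2 ↔ 1 - α < Real.logb 3 2 := by
    nth_rw 1 [h2eq]
    exact Real.rpow_lt_rpow_left_iff (by norm_num : (1:ℝ) < 3)
  rw [hiff]
  have hlog : Real.logb 3 (3/2) = 1 - Real.logb 3 2 := by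
    rw [Real.logb_div (by norm_num) (by norm_num)]
    simp
  rw [hlog]
  constructor <;> intro h <;> linarith
end

section
/- Let v : [0,T] → ℝ be absolutely continuous (say, continuously differentiable) and 0 < α < 1. Then for every t ∈ (0,T], v(t) · ∂₀ₜ^α v(t) ≥ (1/2) ∂₀ₜ^α (v²)(t), where ∂₀ₜ^α denotes the Caputo fractional derivative of order α. -/
/-!
With `w η = v t - v η`, the difference `v t * caputo α v t - ½ caputo α (v ^ 2) t` is
`Γ(1 - α)⁻¹ ∫₀ᵗ w η * (-w' η) * (t - η) ^ (-α) dη`. Integrating by parts, the primitive `F s` of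
this integrand plus `w s ^ 2 * (t - s) ^ (-α) / 2` has derivative
`α * w s ^ 2 * (t - s) ^ (-α - 1) / 2 ≥ 0`, so it increases on `[0, t]`. It starts nonnegative at
`s = 0`, and since `w s ^ 2 = O((t - s) ^ 2)` the boundary term vanishes as `s → t`, leaving `F t`.
-/

open Real Set MeasureTheory intervalIntegral Filter Topology

/-- The Caputo fractional derivative of order α ∈ (0,1) of v at time t. -/
noncomputable def caputo (α : ℝ) (v : ℝ → ℝ) (t : ℝ) : ℝ :=
  (1 / Real.Gamma (1 - α)) * ∫ η in (0 : ℝ)..t, deriv v η * (t - η) ^ (-α)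

section
variable {v : ℝ → ℝ} {v' α a s t : ℝ}

lemma tendsto_sq_sub_mul_rpow_neg_nhdsLT (hv : HasDerivAt v v' t) (hα : α < 2) :
    Tendsto (fun s => (v t - v s) ^ 2 * (t - s) ^ (-α)) (𝓝[<] t) (𝓝 0) := by
  have hslope : Tendsto (slope v t) (𝓝[<] t) (𝓝 v') :=
    hv.tendsto_slope.mono_left (nhdsWithin_mono _ fun _ hs => ne_of_lt hs)
  have hsub : Tendsto (fun s => t - s) (𝓝[<] t) (𝓝 0) := by
    simpa using ((continuous_sub_left t).tendsto t).mono_left nhdsWithin_le_nhds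
  have hpow : Tendsto (fun s => (t - s) ^ (2 - α)) (𝓝[<] t) (𝓝 0) := by
    have h := (continuousAt_rpow_const 0 (2 - α) (Or.inr (by linarith))).tendsto.comp hsub
    rwa [zero_rpow (by linarith)] at h
  have hlim := (hslope.pow 2).mul hpow
  rw [mul_zero] at hlim
  refine hlim.congr' ?_
  filter_upwards [self_mem_nhdsWithin] with s (hs : s < t)
  have hts : 0 < t - s := sub_pos.2 hs
  rw [slope_def_field, ← neg_div_neg_eq, neg_sub, neg_sub, div_pow, rpow_sub hts, rpow_two,
    rpow_neg hts.le]
  field_simp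

lemma continuousOn_sq_sub_mul_rpow_neg_Iic (hv : Continuous v) (hvt : HasDerivAt v v' t)
    (hα : α < 2) : ContinuousOn (fun s => (v t - v s) ^ 2 * (t - s) ^ (-α)) (Iic t) := by
  intro s hs
  rcases (mem_Iic.1 hs).lt_or_eq with hst | rfl
  · exact (((continuous_const.sub hv).pow 2).continuousAt.mul
      ((continuousAt_const.sub continuousAt_id).rpow_const
        (Or.inl (sub_pos.2 hst).ne'))).continuousWithinAt
  · rw [← continuousWithinAt_Iio_iff_Iic, ContinuousWithinAt]
    simpa using tendsto_sq_sub_mul_rpow_neg_nhdsLT hvt hα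

lemma intervalIntegrable_mul_sub_rpow_neg {φ : ℝ → ℝ} (hφ : Continuous φ) (hα : α < 1) (b : ℝ) :
    IntervalIntegrable (fun η => φ η * (t - η) ^ (-α)) volume a b := by
  have hker : IntervalIntegrable (fun η => (t - η) ^ (-α)) volume a b := by
    simpa using (intervalIntegrable_rpow' (a := t - a) (b := t - b) (by linarith)).comp_sub_left t
  exact hker.continuousOn_mul hφ.continuousOn

lemma hasDerivAt_sub_rpow_neg (hs : s < t) :
    HasDerivAt (fun x => (t - x) ^ (-α)) (α * (t - s) ^ (-α - 1)) s := by
  have h := (hasDerivAt_rpow_const (p := -α) (Or.inl (sub_pos.2 hs).ne')).comp s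
    ((hasDerivAt_id s).const_sub t)
  exact h.congr_deriv (by simp)

theorem integral_sub_mul_deriv_mul_rpow_neg_nonneg (hv : ContDiff ℝ 1 v) (hα0 : 0 ≤ α)
    (hα1 : α < 1) (hat : a ≤ t) :
    0 ≤ ∫ η in a..t, (v t - v η) * deriv v η * (t - η) ^ (-α) := by
  have hvc : Continuous v := hv.continuous
  have hv' : Continuous (deriv v) := hv.continuous_deriv le_rfl
  have hdv (x : ℝ) : HasDerivAt v (deriv v x) x := (hv.differentiable one_ne_zero x).hasDerivAt
  set f := fun η => (v t - v η) * deriv v η * (t - η) ^ (-α)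
  have hf : IntervalIntegrable f volume a t :=
    intervalIntegrable_mul_sub_rpow_neg ((continuous_const.sub hvc).mul hv') hα1 t
  have hf_cont : ContinuousOn f (Iio t) := fun s hst =>
    (((continuous_const.sub hvc).mul hv').continuousAt.mul
      ((continuousAt_const.sub continuousAt_id).rpow_const
        (Or.inl (sub_pos.2 hst).ne'))).continuousWithinAt
  set G := fun s => (∫ η in a..s, f η) + (v t - v s) ^ 2 * (t - s) ^ (-α) / 2
  have hG_cont : ContinuousOn G (Icc a t) := by
    have hF := continuousOn_primitive_interval' hf left_mem_uIcc
    rw [uIcc_of_le hat] at hF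
    exact hF.add (((continuousOn_sq_sub_mul_rpow_neg_Iic hvc (hdv t) (by linarith)).mono
      fun _ hs => hs.2).div_const 2)
  have hG_deriv : ∀ s ∈ Ioo a t,
      HasDerivAt G (α * (v t - v s) ^ 2 * (t - s) ^ (-α - 1) / 2) s := by
    intro s ⟨has, hst⟩
    have hF : HasDerivAt (fun s => ∫ η in a..s, f η) (f s) s :=
      integral_hasDerivAt_right
        (hf.mono_set (uIcc_subset_uIcc_left (mem_uIcc_of_le has.le hst.le)))
        (hf_cont.stronglyMeasurableAtFilter isOpen_Iio s hst)
        ((hf_cont s hst).continuousAt (Iio_mem_nhds hst))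
    have hsq := ((((hdv s).const_sub (v t)).pow 2).mul
      (hasDerivAt_sub_rpow_neg (α := α) hst)).div_const 2
    exact (hF.add hsq).congr_deriv (by simp only [f, Pi.pow_apply]; ring)
  have hmono : MonotoneOn G (Icc a t) := by
    refine monotoneOn_of_hasDerivWithinAt_nonneg (convex_Icc a t) hG_cont
      (fun s hs => (hG_deriv s (by rwa [interior_Icc] at hs)).hasDerivWithinAt) fun s hs => ?_
    rw [interior_Icc] at hs
    have := rpow_nonneg (sub_pos.2 hs.2).le (-α - 1)
    positivity
  have hGa_le_Gt := hmono (left_mem_Icc.2 hat) (right_mem_Icc.2 hat) hat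
  have hGa_nonneg : 0 ≤ G a := by
    have := rpow_nonneg (sub_nonneg.2 hat) (-α)
    simp only [G, integral_same, zero_add]
    positivity
  simpa [G] using hGa_nonneg.trans hGa_le_Gt

lemma mul_caputo_sub_half_caputo_sq (hv : ContDiff ℝ 1 v) (hα : α < 1) (t : ℝ) :
    v t * caputo α v t - 1 / 2 * caputo α (fun s => v s ^ 2) t =
      1 / Gamma (1 - α) * ∫ η in (0 : ℝ)..t, (v t - v η) * deriv v η * (t - η) ^ (-α) := by
  have hv' : Continuous (deriv v) := hv.continuous_deriv le_rfl
  have hderiv_sq : deriv (fun s => v s ^ 2) = fun η => 2 * (v η * deriv v η) :=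
    funext fun η => by
      simpa [mul_assoc] using (((hv.differentiable one_ne_zero η).hasDerivAt).fun_pow 2).deriv
  have hA := intervalIntegrable_mul_sub_rpow_neg (a := 0) (t := t) hv' hα t
  have hB := intervalIntegrable_mul_sub_rpow_neg (a := 0) (t := t)
    (φ := fun η => v η * deriv v η) (hv.continuous.mul hv') hα t
  have hsplit : ∫ η in (0 : ℝ)..t, (v t - v η) * deriv v η * (t - η) ^ (-α) =
      v t * (∫ η in (0 : ℝ)..t, deriv v η * (t - η) ^ (-α)) -
        ∫ η in (0 : ℝ)..t, v η * deriv v η * (t - η) ^ (-α) := by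
    rw [← intervalIntegral.integral_const_mul, ← integral_sub (hA.const_mul _) hB]
    exact integral_congr fun η _ => by ring
  have hsq : ∫ η in (0 : ℝ)..t, deriv (fun s => v s ^ 2) η * (t - η) ^ (-α) =
      2 * ∫ η in (0 : ℝ)..t, v η * deriv v η * (t - η) ^ (-α) := by
    rw [hderiv_sq, ← intervalIntegral.integral_const_mul]
    exact integral_congr fun η _ => by ring
  rw [caputo, caputo, hsq, hsplit]
  ring

end

theorem stmt_4_general (α T : ℝ) (hα0 : 0 < α) (hα1 : α < 1)
    (v : ℝ → ℝ) (hv : ContDiff ℝ 1 v) :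
    ∀ t ∈ Ioc (0 : ℝ) T,
      (1 / 2) * caputo α (fun s => v s ^ 2) t ≤ v t * caputo α v t := by
  intro t ht
  rw [← sub_nonneg, mul_caputo_sub_half_caputo_sq hv hα1]
  have hΓ : 0 < Gamma (1 - α) := Gamma_pos_of_pos (by linarith)
  exact mul_nonneg (by positivity)
    (integral_sub_mul_deriv_mul_rpow_neg_nonneg hv hα0.le hα1 ht.1.le)

/-- Lemma 1 (Alikhanov): v(t) ∂₀ₜ^α v(t) ≥ ½ ∂₀ₜ^α (v²)(t). -/
theorem stmt_4 (α T : ℝ) (hα0 : 0 < α) (hα1 : α < 1) (hT : 0 < T)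
    (v : ℝ → ℝ) (hv : ContDiff ℝ 1 v) :
    ∀ t ∈ Ioc (0 : ℝ) T,
      (1 / 2) * caputo α (fun s => v s ^ 2) t ≤ v t * caputo α v t :=
  stmt_4_general α T hα0 hα1 v hv
end

section
/- Let g_s^{j+1}, s = 0,…,j, be positive reals with g_j^{j+1} > g_{j-1}^{j+1} > ⋯ > g_0^{j+1}. For any real sequence v⁰, v¹, …, v^{j+1}, defining Δv = Σ_{s=0}^{j} (v^{s+1} - v^s) g_s^{j+1} and Δ(v²) = Σ_{s=0}^{j} ((v^{s+1})² - (v^s)²) g_s^{j+1}, one has v^{j+1} Δv ≥ (1/2) Δ(v²) + (1/(2 g_j^{j+1})) (Δv)². -/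
open Finset

/-- Lemma 5, first inequality: for strictly increasing positive weights g₀ < ⋯ < g_j,
v^{j+1} Δv ≥ ½ Δ(v²) + (1/(2 g_j)) (Δv)², where Δw = Σ_{s=0}^{j} (w^{s+1}-w^s) g_s. -/
theorem stmt_6 (j : ℕ) (g v : ℕ → ℝ)
    (hpos : ∀ s ≤ j, 0 < g s)
    (hmono : ∀ s < j, g s < g (s + 1)) :
    (1 / 2) * (∑ s ∈ Finset.range (j + 1), ((v (s + 1)) ^ 2 - (v s) ^ 2) * g s)
      + (1 / (2 * g j)) * (∑ s ∈ Finset.range (j + 1), (v (s + 1) - v s) * g s) ^ 2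
    ≤ v (j + 1) * ∑ s ∈ Finset.range (j + 1), (v (s + 1) - v s) * g s := by
  set S : ℕ → ℝ := fun k => ∑ s ∈ Finset.range k, (v (s + 1) - v s) * g s with hS
  -- Energy identity
  have hid : ∀ n : ℕ, (∀ s < n, g s ≠ 0) →
      v n * S n - (1/2) * ∑ s ∈ Finset.range n, ((v (s+1))^2 - (v s)^2) * g s
        = (1/2) * ∑ k ∈ Finset.range n, ((S (k+1))^2 - (S k)^2) / g k := by
    intro n
    induction n with
    | zero => intro _; simp [hS]
    | succ n ih =>
      intro h
      have hg : g n ≠ 0 := h n (Nat.lt_succ_self n)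
      have ihn := ih (fun s hs => h s (hs.trans (Nat.lt_succ_self n)))
      have hSs : S (n+1) = S n + (v (n+1) - v n) * g n := by
        simp [hS, Finset.sum_range_succ]
      rw [Finset.sum_range_succ, Finset.sum_range_succ]
      have key : v (n+1) * S (n+1) - v n * S n - (1/2)*(((v (n+1))^2 - (v n)^2) * g n)
          = (1/2) * (((S (n+1))^2 - (S n)^2) / g n) := by
        rw [hSs]; field_simp; ring
      linarith [ihn, key]
  -- Abel summation identity
  have habel : ∀ n : ℕ, ∑ k ∈ Finset.range (n+1), ((S (k+1))^2 - (S k)^2) / g k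
      = (S (n+1))^2 / g n + ∑ k ∈ Finset.range n, (S (k+1))^2 * (1/g k - 1/g (k+1)) := by
    intro n
    induction n with
    | zero => simp [hS]
    | succ n ih =>
      rw [Finset.sum_range_succ, ih, Finset.sum_range_succ]
      ring
  have hne : ∀ s < j + 1, g s ≠ 0 := fun s hs => (hpos s (Nat.lt_succ_iff.mp hs)).ne'
  have h1 := hid (j+1) hne
  have h2 := habel j
  have h3 : 0 ≤ ∑ k ∈ Finset.range j, (S (k+1))^2 * (1/g k - 1/g (k+1)) := by
    apply Finset.sum_nonneg
    intro k hk
    have hk' : k < j := Finset.mem_range.mp hk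
    have hgk : 0 < g k := hpos k hk'.le
    have hgk1 : 0 < g (k+1) := hpos (k+1) hk'
    have : 1 / g (k+1) ≤ 1 / g k := by
      apply one_div_le_one_div_of_le hgk (hmono k hk').le
    have h4 : (0:ℝ) ≤ (S (k+1))^2 := sq_nonneg _
    nlinarith
  have hgj : 0 < g j := hpos j le_rfl
  have hhalf : (1 / (2 * g j)) * (S (j+1))^2 = (1/2) * ((S (j+1))^2 / g j) := by
    field_simp
  rw [h2] at h1
  show (1 / 2) * (∑ s ∈ Finset.range (j + 1), ((v (s + 1)) ^ 2 - (v s) ^ 2) * g s)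
      + (1 / (2 * g j)) * (S (j+1)) ^ 2 ≤ v (j + 1) * S (j+1)
  rw [hhalf]
  linarith [h1, h3]
end

section
/- Let u ∈ C²[0, t_{j+1}], M₂ = max |u''| on [0, t_{j+1}], and let Π_{1,s} u denote the linear interpolant of u on [t_{s-1}, t_s] (uniform grid t_s = sτ). Then |(1/Γ(1-α)) Σ_{s=1}^{j} ∫_{t_{s-1}}^{t_s} (u'(η) - (Π_{1,s}u)'(η)) (t_{j+1/2} - η)^{-α} dη| ≤ (2^α M₂ / (8 Γ(1-α))) τ^{2-α}. -/
/-!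
On a cell `[a, b]` the interpolation error `e = u - Π₁u` vanishes at both ends, and
`±e - M₂/2 (t - a)(b - t)` is convex, so `|e| ≤ M₂ (b - a)² / 8`. Integrating by parts moves the
derivative from `e` onto the weight `(t_{j+1/2} - η)^(-α)`, which is increasing; each cell therefore
contributes at most `M₂ τ² / 8` times the increment of the weight over it. These increments
telescope to at most `(τ/2)^(-α) = 2^α τ^(-α)`.
-/

open Real Set Finset intervalIntegral MeasureTheory

lemma le_of_neg_le_deriv2 {φ φ' φ'' : ℝ → ℝ} {a b M x : ℝ}
    (hφ : ∀ t ∈ Icc a b, HasDerivAt φ (φ' t) t) (hφ' : ∀ t ∈ Icc a b, HasDerivAt φ' (φ'' t) t)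
    (hM : ∀ t ∈ Icc a b, -M ≤ φ'' t) (ha : φ a = 0) (hb : φ b = 0) (hx : x ∈ Icc a b) :
    φ x ≤ M / 2 * ((x - a) * (b - x)) := by
  set g : ℝ → ℝ := fun t => φ t - M / 2 * ((t - a) * (b - t))
  have hg : ConvexOn ℝ (Icc a b) g := by
    refine convexOn_of_hasDerivWithinAt2_nonneg (convex_Icc a b)
      (f' := fun t => φ' t - M / 2 * (a + b - 2 * t)) (f'' := fun t => φ'' t + M)
      (fun t ht => ((hφ t ht).continuousAt.sub (by fun_prop)).continuousWithinAt)
      (fun t ht => ?_) (fun t ht => ?_) (fun t ht => ?_) <;> replace ht := interior_subset ht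
    · exact ((hφ t ht).sub (((hasDerivAt_id' t).sub_const a).mul
        ((hasDerivAt_id' t).const_sub b) |>.const_mul _)).hasDerivWithinAt.congr_deriv (by ring)
    · exact ((hφ' t ht).sub ((((hasDerivAt_id' t).const_mul 2).const_sub (a + b)).const_mul _)
        ).hasDerivWithinAt.congr_deriv (by ring)
    · linarith [hM t ht]
  have hab : a ≤ b := hx.1.trans hx.2
  have hgx : g x ≤ 0 := by
    simpa [g, ha, hb] using
      hg.le_on_segment (left_mem_Icc.2 hab) (right_mem_Icc.2 hab) (by rwa [segment_eq_Icc hab])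
  simp only [g] at hgx
  linarith

lemma abs_le_of_abs_deriv2_le {φ φ' φ'' : ℝ → ℝ} {a b M x : ℝ}
    (hφ : ∀ t ∈ Icc a b, HasDerivAt φ (φ' t) t) (hφ' : ∀ t ∈ Icc a b, HasDerivAt φ' (φ'' t) t)
    (hM : ∀ t ∈ Icc a b, |φ'' t| ≤ M) (ha : φ a = 0) (hb : φ b = 0) (hx : x ∈ Icc a b) :
    |φ x| ≤ M * (b - a) ^ 2 / 8 := by
  have hupper := le_of_neg_le_deriv2 hφ hφ' (fun t ht => neg_le_of_abs_le (hM t ht)) ha hb hx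
  have hlower := le_of_neg_le_deriv2 (fun t ht => (hφ t ht).neg) (fun t ht => (hφ' t ht).neg)
    (fun t ht => neg_le_neg (le_of_abs_le (hM t ht))) (by simp [ha]) (by simp [hb]) hx
  rw [Pi.neg_apply] at hlower
  have hM0 : 0 ≤ M := (abs_nonneg _).trans (hM x hx)
  have hquad : (x - a) * (b - x) ≤ (b - a) ^ 2 / 4 := by nlinarith [sq_nonneg (x - a - (b - x))]
  rw [abs_le]
  constructor <;> nlinarith

noncomputable def linInterp (u : ℝ → ℝ) (a b t : ℝ) : ℝ := u a + (u b - u a) / (b - a) * (t - a)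

lemma linInterp_left (u : ℝ → ℝ) (a b : ℝ) : linInterp u a b a = u a := by
  simp [linInterp]

lemma linInterp_right (u : ℝ → ℝ) (a b : ℝ) : linInterp u a b b = u b := by
  rcases eq_or_ne b a with rfl | hba
  · simp [linInterp]
  · simp [linInterp, div_mul_cancel₀ _ (sub_ne_zero.2 hba)]

lemma hasDerivAt_linInterp (u : ℝ → ℝ) (a b t : ℝ) :
    HasDerivAt (linInterp u a b) ((u b - u a) / (b - a)) t := by
  unfold linInterp
  simpa using (((hasDerivAt_id' t).sub_const a).const_mul ((u b - u a) / (b - a))).const_add (u a)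

lemma abs_sub_linInterp_le {u : ℝ → ℝ} (hu : ContDiff ℝ 2 u) {a b M x : ℝ}
    (hM : ∀ t ∈ Icc a b, |iteratedDeriv 2 u t| ≤ M) (hx : x ∈ Icc a b) :
    |u x - linInterp u a b x| ≤ M * (b - a) ^ 2 / 8 := by
  have hu' : ContDiff ℝ 1 (deriv u) := (contDiff_succ_iff_deriv.mp hu).2.2
  refine abs_le_of_abs_deriv2_le (φ := fun t => u t - linInterp u a b t)
    (fun t _ => (hu.differentiable two_ne_zero t).hasDerivAt.sub (hasDerivAt_linInterp u a b t))
    (fun t _ => ?_) hM (by simp [linInterp_left]) (by simp [linInterp_right]) hx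
  rw [iteratedDeriv_succ, iteratedDeriv_one]
  exact (hu'.differentiable one_ne_zero t).hasDerivAt.sub_const _

lemma abs_integral_deriv_mul_le {e e' w w' : ℝ → ℝ} {a b E : ℝ} (hab : a ≤ b)
    (he : ∀ t ∈ uIcc a b, HasDerivAt e (e' t) t) (hw : ∀ t ∈ uIcc a b, HasDerivAt w (w' t) t)
    (he' : IntervalIntegrable e' volume a b) (hw' : IntervalIntegrable w' volume a b)
    (hw'_nonneg : ∀ t ∈ Icc a b, 0 ≤ w' t) (hea : e a = 0) (heb : e b = 0)
    (hE : ∀ t ∈ Icc a b, |e t| ≤ E) :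
    |∫ t in a..b, e' t * w t| ≤ E * (w b - w a) := by
  have hparts : ∫ t in a..b, e' t * w t = -∫ t in a..b, w' t * e t := by
    simp_rw [mul_comm (e' _)]
    rw [integral_mul_deriv_eq_deriv_mul hw he hw' he', hea, heb]
    simp
  have hbound : ∀ t ∈ Ioc a b, ‖w' t * e t‖ ≤ w' t * E := fun t ht => by
    have ht' : t ∈ Icc a b := Ioc_subset_Icc_self ht
    rw [norm_mul, Real.norm_of_nonneg (hw'_nonneg t ht')]
    exact mul_le_mul_of_nonneg_left (hE t ht') (hw'_nonneg t ht')
  calc |∫ t in a..b, e' t * w t| = ‖∫ t in a..b, w' t * e t‖ := by rw [hparts, abs_neg]; rfl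
    _ ≤ ∫ t in a..b, w' t * E :=
      norm_integral_le_of_norm_le hab (Filter.Eventually.of_forall hbound) (hw'.mul_const E)
    _ = E * (w b - w a) := by
      rw [intervalIntegral.integral_mul_const, integral_eq_sub_of_hasDerivAt hw hw', mul_comm]

lemma abs_integral_deriv_sub_slope_mul_rpow_le {u : ℝ → ℝ} (hu : ContDiff ℝ 2 u) {a b c M α : ℝ}
    (hab : a ≤ b) (hbc : b < c) (hα : 0 ≤ α) (hM : ∀ t ∈ Icc a b, |iteratedDeriv 2 u t| ≤ M) :
    |∫ η in a..b, (deriv u η - (u b - u a) / (b - a)) * (c - η) ^ (-α)|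
      ≤ M * (b - a) ^ 2 / 8 * ((c - b) ^ (-α) - (c - a) ^ (-α)) := by
  have hc : ∀ t ∈ uIcc a b, 0 < c - t := fun t ht => by
    rw [uIcc_of_le hab] at ht; linarith [ht.2]
  have hw : ∀ t ∈ uIcc a b,
      HasDerivAt (fun η => (c - η) ^ (-α)) (α * (c - t) ^ (-α - 1)) t := fun t ht => by
    convert ((hasDerivAt_id' t).const_sub c).rpow_const (p := -α) (Or.inl (hc t ht).ne') using 1
    ring
  have hu' : ContDiff ℝ 1 (deriv u) := (contDiff_succ_iff_deriv.mp hu).2.2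
  refine abs_integral_deriv_mul_le hab
    (fun t _ => (hu.differentiable two_ne_zero t).hasDerivAt.sub (hasDerivAt_linInterp u a b t))
    hw ((hu'.continuous.sub continuous_const).intervalIntegrable _ _)
    (ContinuousOn.intervalIntegrable fun t ht => ?_) (fun t ht => ?_)
    (by simp [linInterp_left]) (by simp [linInterp_right])
    (fun t ht => abs_sub_linInterp_le hu hM ht)
  · exact (continuousAt_const.mul ((continuousAt_const.sub continuousAt_id).rpow_const
      (Or.inl (hc t ht).ne'))).continuousWithinAt
  · exact mul_nonneg hα (rpow_nonneg (hc t (Icc_subset_uIcc ht)).le _)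

lemma sum_Icc_sub_sub_one (f : ℝ → ℝ) (j : ℕ) :
    ∑ s ∈ Finset.Icc 1 j, (f s - f (s - 1)) = f j - f 0 := by
  induction j with
  | zero => simp
  | succ n ih =>
    rw [sum_Icc_succ_top (by omega), ih, Nat.cast_succ, add_sub_cancel_right]
    ring

lemma abs_sum_integral_deriv_sub_slope_mul_rpow_le {u : ℝ → ℝ} (hu : ContDiff ℝ 2 u)
    {α τ c M : ℝ} (hα : 0 ≤ α) (hτ : 0 < τ) {j : ℕ} (hc : j * τ < c)
    (hM : ∀ t ∈ Icc 0 (j * τ), |iteratedDeriv 2 u t| ≤ M) :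
    |∑ s ∈ Finset.Icc 1 j, ∫ η in ((s : ℝ) - 1) * τ..(s : ℝ) * τ,
        (deriv u η - (u (s * τ) - u ((s - 1) * τ)) / τ) * (c - η) ^ (-α)|
      ≤ M * τ ^ 2 / 8 * ((c - j * τ) ^ (-α) - c ^ (-α)) := by
  calc _ ≤ ∑ s ∈ Finset.Icc 1 j, |∫ η in ((s : ℝ) - 1) * τ..(s : ℝ) * τ,
          (deriv u η - (u (s * τ) - u ((s - 1) * τ)) / τ) * (c - η) ^ (-α)| :=
        abs_sum_le_sum_abs _ _
    _ ≤ ∑ s ∈ Finset.Icc 1 j,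
          M * τ ^ 2 / 8 * ((c - s * τ) ^ (-α) - (c - (s - 1) * τ) ^ (-α)) := by
        refine sum_le_sum fun s hs => ?_
        obtain ⟨hs1, hsj⟩ : (1 : ℝ) ≤ s ∧ (s : ℝ) ≤ j := by
          obtain ⟨h1, h2⟩ := Finset.mem_Icc.1 hs
          exact ⟨by exact_mod_cast h1, by exact_mod_cast h2⟩
        have h := abs_integral_deriv_sub_slope_mul_rpow_le hu (a := (s - 1) * τ) (b := s * τ)
          (by nlinarith) (by nlinarith) hα
          (fun t ht => hM t ⟨by nlinarith [ht.1], by nlinarith [ht.2]⟩)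
        rwa [show (s : ℝ) * τ - (s - 1) * τ = τ by ring] at h
    _ = M * τ ^ 2 / 8 * ((c - j * τ) ^ (-α) - c ^ (-α)) := by
        rw [← mul_sum, sum_Icc_sub_sub_one (fun x => (c - x * τ) ^ (-α)), zero_mul, sub_zero]

/-- Bound on the interior error term R₁^j of Lemma 2:
|(1/Γ(1-α)) Σ_{s=1}^{j} ∫_{t_{s-1}}^{t_s} (u'(η) - (Π_{1,s}u)'(η)) (t_{j+1/2}-η)^{-α} dη|
  ≤ (2^α M₂ / (8 Γ(1-α))) τ^{2-α}. -/
theorem stmt_9 (α τ : ℝ) (hα0 : 0 < α) (hα1 : α < 1) (hτ : 0 < τ)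
    (j : ℕ) (u : ℝ → ℝ) (hu : ContDiff ℝ 2 u) (M₂ : ℝ)
    (hM : ∀ t ∈ Icc (0 : ℝ) (((j : ℝ) + 1) * τ), |iteratedDeriv 2 u t| ≤ M₂) :
    |(1 / Real.Gamma (1 - α))
        * ∑ s ∈ Finset.Icc 1 j,
            ∫ η in (((s : ℝ) - 1) * τ)..((s : ℝ) * τ),
              (deriv u η - (u ((s : ℝ) * τ) - u (((s : ℝ) - 1) * τ)) / τ)
                * (((j : ℝ) + 1/2) * τ - η) ^ (-α)|
      ≤ (2 : ℝ) ^ α * M₂ / (8 * Real.Gamma (1 - α)) * τ ^ (2 - α) := by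
  have hΓ : 0 < Gamma (1 - α) := Gamma_pos_of_pos (by linarith)
  have hM₂ : 0 ≤ M₂ := (abs_nonneg _).trans (hM 0 ⟨le_rfl, by positivity⟩)
  have hsum := abs_sum_integral_deriv_sub_slope_mul_rpow_le hu hα0.le hτ (j := j)
    (c := ((j : ℝ) + 1/2) * τ) (by nlinarith)
    (fun t ht => hM t ⟨ht.1, ht.2.trans (by nlinarith)⟩)
  rw [show ((j : ℝ) + 1/2) * τ - j * τ = τ / 2 by ring] at hsum
  have hfirst : 0 ≤ (((j : ℝ) + 1/2) * τ) ^ (-α) := rpow_nonneg (by positivity) _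
  rw [abs_mul, abs_of_pos (one_div_pos.2 hΓ)]
  calc _ ≤ 1 / Gamma (1 - α) * (M₂ * τ ^ 2 / 8 * (τ / 2) ^ (-α)) := by
        gcongr
        exact hsum.trans (mul_le_mul_of_nonneg_left (sub_le_self _ hfirst) (by positivity))
    _ = 2 ^ α * M₂ / (8 * Gamma (1 - α)) * τ ^ (2 - α) := by
        rw [div_rpow hτ.le zero_le_two, rpow_sub hτ, rpow_neg hτ.le, rpow_neg zero_le_two,
          rpow_two]
        field_simp
end

section
/- Let u ∈ C²[t_j, t_{j+1}] with |u''| ≤ M₂, and let u_{t,j} = (u(t_{j+1}) - u(t_j))/τ. Then |(1/Γ(1-α)) ∫_{t_j}^{t_{j+1/2}} (u'(η) - u_{t,j}) (t_{j+1/2} - η)^{-α} dη| ≤ (2^α M₂ / (4 Γ(2-α))) τ^{2-α}. -/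
open Real Set

/-! Expanding `u` by Taylor's theorem at `η` towards both endpoints of `[t_j, t_{j+1}]` shows
`|u'(η) - u_{t,j}| ≤ M₂ τ / 2` there. Integrating this against the weakly singular kernel
`(t_{j+1/2} - η)^{-α}` over an interval of length `τ / 2` gives
`(M₂ τ / 2) (τ / 2)^{1-α} / (1 - α)`, and `Γ(2 - α) = (1 - α) Γ(1 - α)` yields the constant. -/

theorem abs_sub_sub_deriv_mul_le_of_le {f : ℝ → ℝ} {M η x : ℝ} (hf : Differentiable ℝ f)
    (hηx : η ≤ x) (hM : ∀ s ∈ Icc η x, |deriv f s - deriv f η| ≤ M * (s - η)) :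
    |f x - f η - deriv f η * (x - η)| ≤ M * (x - η) ^ 2 / 2 := by
  -- the remainder vanishes at `η` and its derivative is dominated by that of `M (s - η)² / 2`
  have hB (s : ℝ) : HasDerivAt (fun s => M * (s - η) ^ 2 / 2) (M * (s - η)) s := by
    refine (((((hasDerivAt_id' s).sub_const η).fun_pow 2).const_mul M).div_const 2).congr_deriv ?_
    ring
  have hR (s : ℝ) : HasDerivAt (fun s => f s - f η - deriv f η * (s - η))
      (deriv f s - deriv f η) s := by
    refine (((hf s).hasDerivAt.sub_const (f η)).sub
      (((hasDerivAt_id' s).sub_const η).const_mul (deriv f η))).congr_deriv ?_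
    ring
  refine image_norm_le_of_norm_deriv_right_le_deriv_boundary
    (fun s _ => (hR s).continuousAt.continuousWithinAt) (fun s _ => (hR s).hasDerivWithinAt)
    (by simp) hB (fun s hs => hM s (Ico_subset_Icc_self hs)) ⟨hηx, le_rfl⟩

theorem abs_sub_sub_deriv_mul_le {f : ℝ → ℝ} {M η x : ℝ} (hf : Differentiable ℝ f)
    (hM : ∀ s ∈ uIcc η x, |deriv f s - deriv f η| ≤ M * |s - η|) :
    |f x - f η - deriv f η * (x - η)| ≤ M * (x - η) ^ 2 / 2 := by
  rcases le_total η x with hηx | hxη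
  · refine abs_sub_sub_deriv_mul_le_of_le hf hηx fun s hs => ?_
    rw [← abs_of_nonneg (sub_nonneg.2 hs.1)]
    exact hM s (Icc_subset_uIcc hs)
  · have h := abs_sub_sub_deriv_mul_le_of_le (f := fun s => f (-s)) (M := M)
      (hf.comp differentiable_neg) (neg_le_neg hxη) fun s hs => ?_
    · simp only [deriv_comp_neg, neg_neg] at h
      convert h using 2 <;> ring
    · have hs' := hM (-s) (Icc_subset_uIcc' ⟨by linarith [hs.2], by linarith [hs.1]⟩)
      rw [deriv_comp_neg, deriv_comp_neg, neg_neg]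
      calc |-deriv f (-s) - -deriv f η| = |deriv f (-s) - deriv f η| := by
            rw [← abs_neg]; ring_nf
        _ ≤ M * |-s - η| := hs'
        _ = M * (s - -η) := by rw [abs_of_nonpos (by linarith [hs.1])]; ring

theorem abs_deriv_sub_slope_le {f : ℝ → ℝ} {M a b η : ℝ} (hf : Differentiable ℝ f)
    (hM0 : 0 ≤ M) (hab : a < b) (hη : η ∈ Icc a b)
    (hM : ∀ s ∈ Icc a b, ∀ t ∈ Icc a b, |deriv f s - deriv f t| ≤ M * |s - t|) :
    |deriv f η - (f b - f a) / (b - a)| ≤ M * (b - a) / 2 := by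
  have hsub (x : ℝ) (hx : x ∈ Icc a b) : uIcc η x ⊆ Icc a b := uIcc_subset_Icc hη hx
  have hb := abs_sub_sub_deriv_mul_le (x := b) hf fun s hs =>
    hM s (hsub b (right_mem_Icc.2 hab.le) hs) η hη
  have ha := abs_sub_sub_deriv_mul_le (x := a) hf fun s hs =>
    hM s (hsub a (left_mem_Icc.2 hab.le) hs) η hη
  have hba : 0 < b - a := sub_pos.2 hab
  calc |deriv f η - (f b - f a) / (b - a)|
      = |(f b - f η - deriv f η * (b - η)) - (f a - f η - deriv f η * (a - η))| / (b - a) := by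
        rw [← abs_of_pos hba, ← abs_div, abs_of_pos hba, ← abs_neg]
        congr 1
        field_simp
        ring
    _ ≤ (M * (b - η) ^ 2 / 2 + M * (a - η) ^ 2 / 2) / (b - a) := by
        gcongr
        exact (abs_sub _ _).trans (add_le_add hb ha)
    _ ≤ M * (b - a) / 2 := by
        rw [div_le_iff₀ hba]
        nlinarith [mul_nonneg hM0 (mul_nonneg (sub_nonneg.2 hη.1) (sub_nonneg.2 hη.2))]

theorem abs_deriv_sub_deriv_le_of_abs_iteratedDeriv_two_le {u : ℝ → ℝ} {M a b : ℝ}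
    (hu : ContDiff ℝ 2 u) (hM : ∀ t ∈ Icc a b, |iteratedDeriv 2 u t| ≤ M) :
    ∀ s ∈ Icc a b, ∀ t ∈ Icc a b, |deriv u s - deriv u t| ≤ M * |s - t| := by
  have hd : Differentiable ℝ (deriv u) := by
    simpa only [iteratedDeriv_one] using hu.differentiable_iteratedDeriv 1 (by norm_num)
  intro s hs t ht
  refine (convex_Icc a b).norm_image_sub_le_of_norm_deriv_le (fun x _ => hd x) (fun x hx => ?_) ht hs
  simpa only [iteratedDeriv_succ, iteratedDeriv_zero, Real.norm_eq_abs] using hM x hx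

theorem abs_integral_mul_rpow_neg_le {g : ℝ → ℝ} {C α a m : ℝ} (hα : α < 1) (ham : a ≤ m)
    (hg : ∀ η ∈ Icc a m, |g η| ≤ C) :
    |∫ η in a..m, g η * (m - η) ^ (-α)| ≤ C * (m - a) ^ (1 - α) / (1 - α) := by
  have hkernel : ∫ η in a..m, (m - η) ^ (-α) = (m - a) ^ (1 - α) / (1 - α) := by
    rw [intervalIntegral.integral_comp_sub_left (fun x => x ^ (-α)) m, sub_self,
      integral_rpow (Or.inl (by linarith)), zero_rpow (by linarith), sub_zero,
      neg_add_eq_sub]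
  have hint : IntervalIntegrable (fun η => (m - η) ^ (-α)) MeasureTheory.volume a m := by
    simpa using ((intervalIntegral.intervalIntegrable_rpow' (a := 0) (b := m - a)
      (by linarith : -1 < -α)).comp_sub_left m).symm
  calc |∫ η in a..m, g η * (m - η) ^ (-α)|
      ≤ ∫ η in a..m, C * (m - η) ^ (-α) := by
        rw [← Real.norm_eq_abs]
        refine intervalIntegral.norm_integral_le_of_norm_le ham
          (MeasureTheory.ae_of_all _ fun η hη => ?_) (hint.const_mul C)
        rw [Real.norm_eq_abs, abs_mul, abs_of_nonneg (rpow_nonneg (by linarith [hη.2]) _)]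
        exact mul_le_mul_of_nonneg_right (hg η (Ioc_subset_Icc_self hη))
          (rpow_nonneg (by linarith [hη.2]) _)
    _ = C * (m - a) ^ (1 - α) / (1 - α) := by
        rw [intervalIntegral.integral_const_mul, hkernel, mul_div_assoc]

theorem stmt_10_general (α τ : ℝ) (hα1 : α < 1) (hτ : 0 < τ)
    (j : ℕ) (u : ℝ → ℝ) (hu : ContDiff ℝ 2 u) (M₂ : ℝ)
    (hM : ∀ t ∈ Icc ((j : ℝ) * τ) (((j : ℝ) + 1) * τ), |iteratedDeriv 2 u t| ≤ M₂) :
    |(1 / Real.Gamma (1 - α))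
        * ∫ η in ((j : ℝ) * τ)..(((j : ℝ) + 1/2) * τ),
            (deriv u η - (u (((j : ℝ) + 1) * τ) - u ((j : ℝ) * τ)) / τ)
              * (((j : ℝ) + 1/2) * τ - η) ^ (-α)|
      ≤ (2 : ℝ) ^ α * M₂ / (4 * Real.Gamma (2 - α)) * τ ^ (2 - α) := by
  set a : ℝ := (j : ℝ) * τ
  set b : ℝ := ((j : ℝ) + 1) * τ
  set m : ℝ := ((j : ℝ) + 1/2) * τ
  have hba : b - a = τ := by ring
  have hma : m - a = τ / 2 := by ring
  have hab : a < b := by linarith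
  have hM0 : 0 ≤ M₂ := (abs_nonneg _).trans (hM a (left_mem_Icc.2 hab.le))
  have hslope : ∀ η ∈ Icc a m, |deriv u η - (u b - u a) / τ| ≤ M₂ * τ / 2 := fun η hη => by
    simpa only [hba] using abs_deriv_sub_slope_le (hu.differentiable (by norm_num)) hM0 hab
      ⟨hη.1, by linarith [hη.2]⟩ (abs_deriv_sub_deriv_le_of_abs_iteratedDeriv_two_le hu hM)
  have hR := abs_integral_mul_rpow_neg_le hα1 (by linarith) hslope
  have hΓ : 0 < Real.Gamma (1 - α) := Real.Gamma_pos_of_pos (by linarith)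
  have hΓ2 : Real.Gamma (2 - α) = (1 - α) * Real.Gamma (1 - α) := by
    rw [show 2 - α = (1 - α) + 1 by ring, Real.Gamma_add_one (by linarith)]
  have hpow : (τ / 2) ^ (1 - α) * 2 * τ = 2 ^ α * τ ^ (2 - α) := by
    rw [div_rpow hτ.le zero_le_two, show 2 - α = (1 - α) + 1 by ring, rpow_add_one hτ.ne',
      rpow_sub zero_lt_two, rpow_one]
    field_simp
  have h1α : 1 - α ≠ 0 := by linarith
  rw [hma] at hR
  rw [abs_mul, abs_of_pos (one_div_pos.2 hΓ)]
  calc 1 / Real.Gamma (1 - α) * |∫ η in a..m, (deriv u η - (u b - u a) / τ) * (m - η) ^ (-α)|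
      ≤ 1 / Real.Gamma (1 - α) * (M₂ * τ / 2 * (τ / 2) ^ (1 - α) / (1 - α)) := by gcongr
    _ = 2 ^ α * M₂ / (4 * Real.Gamma (2 - α)) * τ ^ (2 - α) := by
        rw [hΓ2]
        field_simp
        linear_combination 2 * M₂ * hpow

/-- Bound on the near-endpoint error term R_j^{j+1/2} of Lemma 2:
|(1/Γ(1-α)) ∫_{t_j}^{t_{j+1/2}} (u'(η) - u_{t,j}) (t_{j+1/2}-η)^{-α} dη|
  ≤ (2^α M₂ / (4 Γ(2-α))) τ^{2-α}. -/
theorem stmt_10 (α τ : ℝ) (hα0 : 0 < α) (hα1 : α < 1) (hτ : 0 < τ)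
    (j : ℕ) (u : ℝ → ℝ) (hu : ContDiff ℝ 2 u) (M₂ : ℝ)
    (hM : ∀ t ∈ Icc ((j : ℝ) * τ) (((j : ℝ) + 1) * τ), |iteratedDeriv 2 u t| ≤ M₂) :
    |(1 / Real.Gamma (1 - α))
        * ∫ η in ((j : ℝ) * τ)..(((j : ℝ) + 1/2) * τ),
            (deriv u η - (u (((j : ℝ) + 1) * τ) - u ((j : ℝ) * τ)) / τ)
              * (((j : ℝ) + 1/2) * τ - η) ^ (-α)|
      ≤ (2 : ℝ) ^ α * M₂ / (4 * Real.Gamma (2 - α)) * τ ^ (2 - α) :=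
  stmt_10_general α τ hα1 hτ j u hu M₂ hM
end

section
/- For a grid function y = (y₀, …, y_N) on a uniform grid of step h = l/N with y₀ = y_N = 0, define ‖y‖₀² = Σ_{i=1}^{N-1} y_i² h, the averaging operator (H_h y)_i = (y_{i+1} + 10 y_i + y_{i-1})/12 for 1 ≤ i ≤ N-1, and ‖y‖_{H}² = Σ_{i=1}^{N-1} (H_h y)_i y_i h. Then (2/3) ‖y‖₀² ≤ ‖y‖_{H}² ≤ ‖y‖₀². -/
open Finset

lemma stmt_12_key (y : ℕ → ℝ) (h0 : y 0 = 0) (N : ℕ) :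
    ∑ i ∈ Finset.Ico 1 N, (y (i + 1) + 10 * y i + y (i - 1)) * y i
      = 10 * ∑ i ∈ Finset.Ico 1 N, (y i) ^ 2
        + 2 * ∑ i ∈ Finset.Ico 1 N, y (i + 1) * y i - y N * y (N - 1) := by
  induction N with
  | zero => simp [h0]
  | succ n ih =>
    rcases Nat.eq_zero_or_pos n with rfl | hn
    · simp [h0]
    · rw [Finset.sum_Ico_succ_top (by omega), Finset.sum_Ico_succ_top (by omega),
        Finset.sum_Ico_succ_top (by omega), ih]
      simp only [Nat.add_sub_cancel]
      ring

lemma stmt_12_shift (y : ℕ → ℝ) (N : ℕ) (hN : 1 ≤ N) (hNy : y N = 0) :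
    ∑ i ∈ Finset.Ico 1 N, (y (i + 1)) ^ 2 ≤ ∑ i ∈ Finset.Ico 1 N, (y i) ^ 2 := by
  have h1 : ∑ i ∈ Finset.Ico 1 N, (y (i + 1)) ^ 2
      = ∑ i ∈ Finset.Ico 2 (N + 1), (y i) ^ 2 := by
    rw [Finset.sum_Ico_eq_sum_range, Finset.sum_Ico_eq_sum_range]
    apply Finset.sum_congr
    · congr 1
    · intro k _
      have hk2 : 1 + k + 1 = 2 + k := by omega
      rw [hk2]
  rcases eq_or_lt_of_le hN with rfl | h2
  · simp
  rw [h1, Finset.sum_Ico_succ_top (show 2 ≤ N by omega), hNy]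
  simp only [ne_eq, OfNat.ofNat_ne_zero, not_false_eq_true, zero_pow, add_zero]
  apply Finset.sum_le_sum_of_subset_of_nonneg
  · apply Finset.Ico_subset_Ico <;> omega
  · intro i _ _; positivity

/-- Equivalence of the discrete L² norm and the H_h-weighted norm:
(2/3)‖y‖₀² ≤ ‖y‖_H² ≤ ‖y‖₀², where ‖y‖_H² = Σ (H_h y)_i y_i h with
(H_h y)_i = (y_{i+1} + 10 y_i + y_{i-1})/12, for grid functions with y₀ = y_N = 0. -/
theorem stmt_12 (l : ℝ) (hl : 0 < l) (N : ℕ) (hN : 1 ≤ N)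
    (y : ℕ → ℝ) (h : ℝ) (hh : h = l / N) (h0 : y 0 = 0) (hNy : y N = 0) :
    (2 / 3) * (∑ i ∈ Finset.Ico 1 N, (y i) ^ 2 * h)
        ≤ ∑ i ∈ Finset.Ico 1 N, (y (i + 1) + 10 * y i + y (i - 1)) / 12 * y i * h
      ∧ ∑ i ∈ Finset.Ico 1 N, (y (i + 1) + 10 * y i + y (i - 1)) / 12 * y i * h
        ≤ ∑ i ∈ Finset.Ico 1 N, (y i) ^ 2 * h := by
  have hNpos : (0 : ℝ) < N := by
    exact_mod_cast Nat.lt_of_lt_of_le Nat.zero_lt_one hN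
  have hpos : 0 < h := by rw [hh]; positivity
  set A := ∑ i ∈ Finset.Ico 1 N, (y i) ^ 2 with hA
  set C := ∑ i ∈ Finset.Ico 1 N, y (i + 1) * y i with hC
  set B := ∑ i ∈ Finset.Ico 1 N, (y (i + 1)) ^ 2 with hB
  have hBA : B ≤ A := stmt_12_shift y N hN hNy
  -- positivity of Σ (y i ∓ y (i+1))²
  have hsq1 : 0 ≤ ∑ i ∈ Finset.Ico 1 N, (y i - y (i + 1)) ^ 2 :=
    Finset.sum_nonneg fun i _ => sq_nonneg _
  have hsq2 : 0 ≤ ∑ i ∈ Finset.Ico 1 N, (y i + y (i + 1)) ^ 2 :=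
    Finset.sum_nonneg fun i _ => sq_nonneg _
  have hexp1 : ∑ i ∈ Finset.Ico 1 N, (y i - y (i + 1)) ^ 2 = A + B - 2 * C := by
    rw [hA, hB, hC, Finset.mul_sum, ← Finset.sum_add_distrib, ← Finset.sum_sub_distrib]
    apply Finset.sum_congr rfl
    intro i _; ring
  have hexp2 : ∑ i ∈ Finset.Ico 1 N, (y i + y (i + 1)) ^ 2 = A + B + 2 * C := by
    rw [hA, hB, hC, Finset.mul_sum, ← Finset.sum_add_distrib, ← Finset.sum_add_distrib]
    apply Finset.sum_congr rfl
    intro i _; ring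
  have hCle : C ≤ A := by nlinarith
  have hCge : -A ≤ C := by nlinarith
  have hkey : ∑ i ∈ Finset.Ico 1 N, (y (i + 1) + 10 * y i + y (i - 1)) * y i
      = 10 * A + 2 * C := by
    rw [stmt_12_key y h0 N, hNy]; ring
  have hL : ∑ i ∈ Finset.Ico 1 N, (y (i + 1) + 10 * y i + y (i - 1)) / 12 * y i * h
      = (10 * A + 2 * C) * (h / 12) := by
    rw [← hkey, Finset.sum_mul]
    apply Finset.sum_congr rfl
    intro i _; ring
  have hR : ∑ i ∈ Finset.Ico 1 N, (y i) ^ 2 * h = A * h := by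
    rw [hA, Finset.sum_mul]
  constructor
  · rw [hL, hR]; nlinarith
  · rw [hL, hR]; nlinarith
end
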